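/- arXiv:2510.12804 — 2 statements merged into one kernel-verified Lean document; each statement's English description precedes it below -/
import Mathlib

section
/- Let h ∈ C²(C_θ) satisfy ∇_μ h = cot θ · h on ∂C_θ, and set u := h/l where l(ξ) := sin²θ + cos θ·⟨ξ, e⟩. Then ∇_μ u = 0 on ∂C_θ, and along ∂C_θ, for any orthonormal frame e_1, …, e_n on C_θ with e_n = μ, one has ∇²u(e_k, e_n) = -cot θ · ∇_{e_k} u for all k = 1, …, n-1. -/
/- Formalization of statements from "The L_p dual Minkowski problem for capillary
hypersurfaces".

We work in the ambient space `ℝ^{n+1}`.  The spherical cap `C_θ` is the part of the unit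
sphere centred at `cos θ • e` (where `e = -E_{n+1}`) lying in the closed upper half-space.
Functions on `C_θ` are represented by ambient functions `h : Euc n → ℝ`; the intrinsic
(round-metric) gradient `∇h` and Hessian `∇²h` of the restriction of `h` to `C_θ` are
expressed through ambient derivatives (for tangential arguments these expressions depend
only on the restriction of `h` to the cap).  The quantity `det(∇²h + hσ)` is encoded as the
determinant of the endomorphism of `ℝ^{n+1}` acting as `∇²h + hσ` on the tangent space of
the cap and as the identity on the normal line. -/

open Real Set
open scoped RealInnerProductSpace

noncomputable section

/-- Ambient Euclidean space `ℝ^{n+1}`. -/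
abbrev Euc (n : ℕ) : Type := EuclideanSpace ℝ (Fin (n + 1))

/-- The unit vector `e = -E_{n+1}`. -/
def eVec (n : ℕ) : Euc n := -(EuclideanSpace.single (Fin.last n) (1 : ℝ))

/-- `ν(ξ) = ξ - cos θ • e`, the unit normal (at `ξ`) of the sphere containing the cap `C_θ`. -/
def sphNormal (n : ℕ) (θ : ℝ) (ξ : Euc n) : Euc n := ξ - Real.cos θ • eVec n

/-- The spherical cap `C_θ = {ξ ∈ closure ℝ^{n+1}_+ : |ξ - cos θ • e| = 1}`. -/
def cap (n : ℕ) (θ : ℝ) : Set (Euc n) :=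
  {ξ | 0 ≤ ξ (Fin.last n) ∧ ‖sphNormal n θ ξ‖ = 1}

/-- The boundary `∂C_θ`. -/
def capBdry (n : ℕ) (θ : ℝ) : Set (Euc n) :=
  {ξ | ξ (Fin.last n) = 0 ∧ ‖sphNormal n θ ξ‖ = 1}

/-- The outward unit conormal `μ` of `∂C_θ` in `C_θ` (at boundary points). -/
def conormal (n : ℕ) (θ : ℝ) (ξ : Euc n) : Euc n :=
  Real.cot θ • ξ + Real.sin θ • eVec n

/-- Orthogonal projection of `ℝ^{n+1}` onto the tangent space of the cap at `ξ`. -/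
def tproj (n : ℕ) (θ : ℝ) (ξ : Euc n) : Euc n →L[ℝ] Euc n :=
  ContinuousLinearMap.id ℝ (Euc n) - (innerSL ℝ (sphNormal n θ ξ)).smulRight (sphNormal n θ ξ)

/-- `X` is tangent to the cap at `ξ`. -/
def IsTangent (n : ℕ) (θ : ℝ) (ξ X : Euc n) : Prop :=
  ⟪X, sphNormal n θ ξ⟫ = 0

/-- Intrinsic (round-metric) gradient `∇h` of `h` on the cap. -/
def sgrad (n : ℕ) (θ : ℝ) (h : Euc n → ℝ) (ξ : Euc n) : Euc n :=
  tproj n θ ξ (gradient h ξ)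

/-- Intrinsic (round-metric) Hessian `∇²h(X,Y)` of `h` on the cap (tangential arguments). -/
def shess (n : ℕ) (θ : ℝ) (h : Euc n → ℝ) (ξ X Y : Euc n) : ℝ :=
  ⟪(fderiv ℝ (gradient h) ξ) X, Y⟫ - ⟪gradient h ξ, sphNormal n θ ξ⟫ * ⟪X, Y⟫

/-- Endomorphism representing the intrinsic Hessian `∇²h` on tangent vectors
(and vanishing on the normal line). -/
def thessOp (n : ℕ) (θ : ℝ) (h : Euc n → ℝ) (ξ : Euc n) : Euc n →L[ℝ] Euc n :=
  ((tproj n θ ξ).comp ((fderiv ℝ (gradient h) ξ).comp (tproj n θ ξ)))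
    - ⟪gradient h ξ, sphNormal n θ ξ⟫ • tproj n θ ξ

/-- Rank-one projection onto the normal direction at `ξ`. -/
def normalPart (n : ℕ) (θ : ℝ) (ξ : Euc n) : Euc n →L[ℝ] Euc n :=
  (innerSL ℝ (sphNormal n θ ξ)).smulRight (sphNormal n θ ξ)

/-- Endomorphism acting as `∇²h + hσ` on the tangent space and as the identity on the
normal line. -/
def hessOp (n : ℕ) (θ : ℝ) (h : Euc n → ℝ) (ξ : Euc n) : Euc n →L[ℝ] Euc n :=
  thessOp n θ h ξ + h ξ • tproj n θ ξ + normalPart n θ ξ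

/-- `det(∇²h + hσ)` at `ξ`. -/
def sdet (n : ℕ) (θ : ℝ) (h : Euc n → ℝ) (ξ : Euc n) : ℝ :=
  LinearMap.det (hessOp n θ h ξ).toLinearMap

/-- `h > 0` on the cap. -/
def PosOnCap (n : ℕ) (θ : ℝ) (h : Euc n → ℝ) : Prop := ∀ ξ ∈ cap n θ, 0 < h ξ

/-- Convexity of a solution: `∇²h + hσ > 0` on the cap. -/
def IsConvexSol (n : ℕ) (θ : ℝ) (h : Euc n → ℝ) : Prop :=
  ∀ ξ ∈ cap n θ, ∀ X : Euc n, IsTangent n θ ξ X → X ≠ 0 →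
    0 < shess n θ h ξ X X + h ξ * ⟪X, X⟫

/-- The right-hand side `f·h^{p-1}·(h² + |∇h|²)^{(n+1-q)/2}`. -/
def eqRHS (n : ℕ) (θ p q : ℝ) (f h : Euc n → ℝ) (ξ : Euc n) : ℝ :=
  f ξ * h ξ ^ (p - 1) * (h ξ ^ 2 + ‖sgrad n θ h ξ‖ ^ 2) ^ (((n : ℝ) + 1 - q) / 2)

/-- `h` solves `det(∇²h + hσ) = f·h^{p-1}(h² + |∇h|²)^{(n+1-q)/2}` in `C_θ`. -/
def SolvesEq (n : ℕ) (θ p q : ℝ) (f h : Euc n → ℝ) : Prop :=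
  ∀ ξ ∈ cap n θ, sdet n θ h ξ = eqRHS n θ p q f h ξ

/-- Robin boundary condition `∇_μ h = cot θ · h` on `∂C_θ`. -/
def RobinBC (n : ℕ) (θ : ℝ) (h : Euc n → ℝ) : Prop :=
  ∀ ξ ∈ capBdry n θ, ⟪sgrad n θ h ξ, conormal n θ ξ⟫ = Real.cot θ * h ξ

/-- `l(ξ) = sin²θ + cos θ·⟨ξ, e⟩`. -/
def lFun (n : ℕ) (θ : ℝ) (ξ : Euc n) : ℝ :=
  Real.sin θ ^ 2 + Real.cos θ * ⟪ξ, eVec n⟫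

/-- `‖f‖_{C⁰(C_θ)} ≤ K`. -/
def CZeroNormLe (n : ℕ) (θ : ℝ) (f : Euc n → ℝ) (K : ℝ) : Prop :=
  ∀ ξ ∈ cap n θ, |f ξ| ≤ K

/-- `‖f‖_{C¹(C_θ)} ≤ K`. -/
def COneNormLe (n : ℕ) (θ : ℝ) (f : Euc n → ℝ) (K : ℝ) : Prop :=
  CZeroNormLe n θ f K ∧ ∀ ξ ∈ cap n θ, ‖sgrad n θ f ξ‖ ≤ K

/-- `‖f‖_{C²(C_θ)} ≤ K`. -/
def CTwoNormLe (n : ℕ) (θ : ℝ) (f : Euc n → ℝ) (K : ℝ) : Prop :=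
  COneNormLe n θ f K ∧
    ∀ ξ ∈ cap n θ, ∀ X Y : Euc n, IsTangent n θ ξ X → IsTangent n θ ξ Y →
      |shess n θ f ξ X Y| ≤ K * ‖X‖ * ‖Y‖

/-- The linearized operator `L_h(γ)` of the equation `𝒢(∇²h,h) = 𝒥₁(∇h,h)` at `h`:
the derivative at `ε = 0` of `𝒢 - 𝒥₁` along the variation `h_ε = h·e^{εγ}`
(cf. equation (5.4) of the paper, which is exactly this derivative). -/
def linOp (n : ℕ) (θ p q : ℝ) (f h γ : Euc n → ℝ) (ξ : Euc n) : ℝ :=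
  deriv (fun ε : ℝ =>
    sdet n θ (fun x => h x * Real.exp (ε * γ x)) ξ
      - eqRHS n θ p q f (fun x => h x * Real.exp (ε * γ x)) ξ) 0

/-- Endomorphism acting as `l·∇²u + cos θ·(∇u ⊗ e^T + e^T ⊗ ∇u) + uσ` on the tangent space
and as the identity on the normal line. -/
def capillaryOp (n : ℕ) (θ : ℝ) (u : Euc n → ℝ) (ξ : Euc n) : Euc n →L[ℝ] Euc n :=
  lFun n θ ξ • thessOp n θ u ξ
    + Real.cos θ • ((innerSL ℝ (sgrad n θ u ξ)).smulRight (tproj n θ ξ (eVec n))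
        + (innerSL ℝ (tproj n θ ξ (eVec n))).smulRight (sgrad n θ u ξ))
    + u ξ • tproj n θ ξ + normalPart n θ ξ

/-- Endomorphism acting as `∇²v + ∇v ⊗ ∇v + σ` on the tangent space and as the identity on
the normal line. -/
def logOp (n : ℕ) (θ : ℝ) (v : Euc n → ℝ) (ξ : Euc n) : Euc n →L[ℝ] Euc n :=
  thessOp n θ v ξ + (innerSL ℝ (sgrad n θ v ξ)).smulRight (sgrad n θ v ξ)
    + tproj n θ ξ + normalPart n θ ξ

/-- Geodesic distance on `C_θ` from `ξ` to the top point `N = (0,…,0,1-cos θ)`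
(for `θ ∈ (0,π/2)` the cap is geodesically convex, so this is `arccos ⟨ν(ξ), ν(N)⟩`). -/
def distToTop (n : ℕ) (θ : ℝ) (ξ : Euc n) : ℝ :=
  Real.arccos (ξ (Fin.last n) + Real.cos θ)

/-- The function `d := d_N²/(2θ)`. -/
def dCap (n : ℕ) (θ : ℝ) (ξ : Euc n) : ℝ := distToTop n θ ξ ^ 2 / (2 * θ)

/-! The function `l` satisfies the same Robin condition `∇_μ l = cot θ · l` as `h`, so by the
quotient rule `u = h/l` satisfies the Neumann condition `∇_μ u = 0` along `∂C_θ`. Differentiating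
`⟨∇u, μ⟩ = 0` along a great circle of `∂C_θ` with initial velocity `X`, and using that the
conormal `μ(ξ) = cot θ · ξ + sin θ · e` changes by `cot θ · X` in that direction (the
Gauss–Weingarten relation), gives `∇²u(X, μ) + cot θ · ⟨∇u, X⟩ = 0`. -/

theorem fderiv_div_apply_eq_zero {E : Type*} [NormedAddCommGroup E] [NormedSpace ℝ E]
    {f g : E → ℝ} {x v : E} {c : ℝ} (hf : DifferentiableAt ℝ f x) (hg : DifferentiableAt ℝ g x)
    (hgx : g x ≠ 0) (hfv : fderiv ℝ f x v = c * f x) (hgv : fderiv ℝ g x v = c * g x) :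
    fderiv ℝ (fun y => f y / g y) x v = 0 := by
  have hdiv : HasFDerivAt (fun y => f y * (g y)⁻¹)
      (f x • (-(g x ^ 2)⁻¹ • fderiv ℝ g x) + (g x)⁻¹ • fderiv ℝ f x) x :=
    hf.hasFDerivAt.mul ((hasDerivAt_inv hgx).comp_hasFDerivAt x hg.hasFDerivAt)
  simp only [div_eq_mul_inv, hdiv.fderiv, add_apply, smul_apply, smul_eq_mul, hfv, hgv]
  field_simp
  ring

theorem ContDiffAt.differentiableAt_gradient {E : Type*} [NormedAddCommGroup E]
    [InnerProductSpace ℝ E] [CompleteSpace E] {f : E → ℝ} {x : E} (hf : ContDiffAt ℝ 2 f x) :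
    DifferentiableAt ℝ (gradient f) x :=
  (InnerProductSpace.toDual ℝ E).symm.toContinuousLinearEquiv.differentiableAt.comp x
    ((hf.fderiv_right (m := 1) (by norm_num)).differentiableAt one_ne_zero)

-- No hypothesis on `θ` is needed: when `sin θ = 0`, `cot θ = cos θ / 0 = 0`.
theorem cot_mul_sin_sq (θ : ℝ) : cot θ * sin θ ^ 2 = cos θ * sin θ := by
  rcases eq_or_ne (sin θ) 0 with hs | hs
  · simp [hs]
  · rw [cot_eq_cos_div_sin]
    field_simp

section CapBoundary

variable {n : ℕ} {θ : ℝ}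

theorem inner_eVec_self : ⟪eVec n, eVec n⟫ = 1 := by
  simp [eVec]

theorem inner_eVec (x : Euc n) : ⟪x, eVec n⟫ = -x (Fin.last n) := by
  simp [eVec, EuclideanSpace.inner_single_right]

theorem mem_capBdry_iff {ξ : Euc n} :
    ξ ∈ capBdry n θ ↔ ⟪ξ, eVec n⟫ = 0 ∧ ⟪ξ, ξ⟫ = sin θ ^ 2 := by
  rw [inner_eVec, neg_eq_zero]
  refine and_congr_right fun hξe => ?_
  have hν : ‖sphNormal n θ ξ‖ ^ 2 = ⟪ξ, ξ⟫ + cos θ ^ 2 := by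
    rw [← real_inner_self_eq_norm_sq]
    simp only [sphNormal, inner_sub_left, inner_sub_right, real_inner_smul_left,
      real_inner_smul_right, real_inner_comm ξ (eVec n), inner_eVec ξ, hξe, inner_eVec_self]
    ring
  rw [← pow_eq_one_iff_of_nonneg (norm_nonneg _) two_ne_zero, hν, ← sin_sq_add_cos_sq θ,
    add_left_inj]

theorem isTangent_conormal {ξ : Euc n} (hξ : ξ ∈ capBdry n θ) :
    IsTangent n θ ξ (conormal n θ ξ) := by
  obtain ⟨hξe, hξξ⟩ := mem_capBdry_iff.mp hξ
  simp only [IsTangent, conormal, sphNormal, inner_add_left, inner_sub_right,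
    real_inner_smul_left, real_inner_smul_right, real_inner_comm ξ (eVec n), hξe, hξξ,
    inner_eVec_self, cot_mul_sin_sq]
  ring

theorem inner_eVec_conormal {ξ : Euc n} (hξ : ξ ∈ capBdry n θ) :
    ⟪eVec n, conormal n θ ξ⟫ = sin θ := by
  simp only [conormal, inner_add_right, real_inner_smul_right, real_inner_comm ξ (eVec n),
    (mem_capBdry_iff.mp hξ).1, inner_eVec_self]
  ring

theorem inner_sgrad_of_isTangent {f : Euc n → ℝ} {ξ X : Euc n} (hX : IsTangent n θ ξ X) :
    ⟪sgrad n θ f ξ, X⟫ = fderiv ℝ f ξ X := by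
  rw [IsTangent, real_inner_comm] at hX
  simp [sgrad, tproj, inner_sub_left, real_inner_smul_left, hX, inner_gradient_left]

theorem inner_eq_zero_of_isTangent_of_inner_conormal (hs : sin θ ≠ 0) {ξ X : Euc n}
    (hX : IsTangent n θ ξ X) (hXμ : ⟪X, conormal n θ ξ⟫ = 0) :
    ⟪X, ξ⟫ = 0 ∧ ⟪X, eVec n⟫ = 0 := by
  simp only [IsTangent, sphNormal, inner_sub_right, real_inner_smul_right] at hX
  simp only [conormal, inner_add_right, real_inner_smul_right, cot_eq_cos_div_sin] at hXμ
  have hXξ : ⟪X, ξ⟫ = cos θ * ⟪X, eVec n⟫ := by linarith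
  rw [hXξ] at hXμ
  field_simp at hXμ
  have hXe : ⟪X, eVec n⟫ = 0 := by
    linear_combination hXμ - ⟪X, eVec n⟫ * sin_sq_add_cos_sq θ
  exact ⟨by rw [hXξ, hXe, mul_zero], hXe⟩

theorem lFun_of_mem_capBdry {ξ : Euc n} (hξ : ξ ∈ capBdry n θ) : lFun n θ ξ = sin θ ^ 2 := by
  simp [lFun, (mem_capBdry_iff.mp hξ).1]

theorem contDiff_lFun {k : WithTop ℕ∞} : ContDiff ℝ k (lFun n θ) :=
  contDiff_const.add (contDiff_const.mul (contDiff_id.inner ℝ contDiff_const))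

theorem hasFDerivAt_lFun (ξ : Euc n) :
    HasFDerivAt (lFun n θ) (cos θ • innerSL ℝ (eVec n)) ξ := by
  have hl : lFun n θ = fun y => sin θ ^ 2 + cos θ * innerSL ℝ (eVec n) y := by
    funext y
    rw [lFun, innerSL_apply_apply, real_inner_comm]
  rw [hl]
  exact ((innerSL ℝ (eVec n)).hasFDerivAt.const_mul (cos θ)).const_add _

theorem RobinBC.fderiv_conormal {f : Euc n → ℝ} (hf : RobinBC n θ f) {ξ : Euc n}
    (hξ : ξ ∈ capBdry n θ) : fderiv ℝ f ξ (conormal n θ ξ) = cot θ * f ξ := by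
  rw [← inner_sgrad_of_isTangent (isTangent_conormal hξ), hf ξ hξ]

theorem robinBC_lFun : RobinBC n θ (lFun n θ) := by
  intro ξ hξ
  rw [inner_sgrad_of_isTangent (isTangent_conormal hξ), (hasFDerivAt_lFun ξ).fderiv,
    lFun_of_mem_capBdry hξ, cot_mul_sin_sq]
  simp [inner_eVec_conormal hξ]

theorem RobinBC.fderiv_div_conormal_eq_zero {f g : Euc n → ℝ} (hf : RobinBC n θ f)
    (hg : RobinBC n θ g) {ξ : Euc n} (hξ : ξ ∈ capBdry n θ) (hfξ : DifferentiableAt ℝ f ξ)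
    (hgξ : DifferentiableAt ℝ g ξ) (hg0 : g ξ ≠ 0) :
    fderiv ℝ (fun x => f x / g x) ξ (conormal n θ ξ) = 0 :=
  fderiv_div_apply_eq_zero hfξ hgξ hg0 (hf.fderiv_conormal hξ) (hg.fderiv_conormal hξ)

theorem exists_hasDerivAt_mem_capBdry (hs : sin θ ≠ 0) {ξ X : Euc n} (hξ : ξ ∈ capBdry n θ)
    (hXξ : ⟪X, ξ⟫ = 0) (hXe : ⟪X, eVec n⟫ = 0) :
    ∃ c : ℝ → Euc n, c 0 = ξ ∧ HasDerivAt c X 0 ∧ ∀ t, c t ∈ capBdry n θ := by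
  rcases eq_or_ne X 0 with rfl | hX
  · exact ⟨fun _ => ξ, rfl, hasDerivAt_const _ _, fun _ => hξ⟩
  obtain ⟨hξe, hξξ⟩ := mem_capBdry_iff.mp hξ
  set k := ‖X‖ / sin θ with hk_def
  have hk : k ≠ 0 := div_ne_zero (norm_ne_zero_iff.mpr hX) hs
  set w := k⁻¹ • X
  have hξw : ⟪ξ, w⟫ = 0 := by rw [real_inner_smul_right, real_inner_comm, hXξ, mul_zero]
  have hww : ⟪w, w⟫ = sin θ ^ 2 := by
    rw [real_inner_smul_left, real_inner_smul_right, real_inner_self_eq_norm_sq, hk_def]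
    field_simp
  refine ⟨fun t => cos (k * t) • ξ + sin (k * t) • w, by simp, ?_, fun t => ?_⟩
  · have hlin := (hasDerivAt_id (0 : ℝ)).const_mul k
    refine ((hlin.cos.smul_const ξ).add (hlin.sin.smul_const w)).congr_deriv ?_
    simp [w, smul_smul, hk]
  · rw [mem_capBdry_iff]
    constructor
    · simp [inner_add_left, real_inner_smul_left, hξe, hXe, w]
    · simp only [inner_add_left, inner_add_right, real_inner_smul_left, real_inner_smul_right,
        hξξ, hww, real_inner_comm ξ w, hξw]
      linear_combination sin θ ^ 2 * sin_sq_add_cos_sq (k * t)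

theorem inner_fderiv_gradient_conormal (hs : sin θ ≠ 0) {u : Euc n → ℝ} {ξ X : Euc n}
    (hξ : ξ ∈ capBdry n θ) (hu : DifferentiableAt ℝ (gradient u) ξ)
    (hN : ∀ y ∈ capBdry n θ, fderiv ℝ u y (conormal n θ y) = 0)
    (hXξ : ⟪X, ξ⟫ = 0) (hXe : ⟪X, eVec n⟫ = 0) :
    ⟪fderiv ℝ (gradient u) ξ X, conormal n θ ξ⟫ = -cot θ * ⟪gradient u ξ, X⟫ := by
  obtain ⟨c, rfl, hc, hcB⟩ := exists_hasDerivAt_mem_capBdry hs hξ hXξ hXe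
  have hμ : HasDerivAt (fun t => conormal n θ (c t)) (cot θ • X) 0 :=
    (hc.const_smul (cot θ)).add_const (sin θ • eVec n)
  have hF := HasDerivAt.inner ℝ (hu.hasFDerivAt.comp_hasDerivAt 0 hc) hμ
  have hF0 (t : ℝ) : ⟪gradient u (c t), conormal n θ (c t)⟫ = 0 := by
    rw [inner_gradient_left, hN _ (hcB t)]
  simp only [Function.comp_apply, hF0, real_inner_smul_right] at hF
  linarith [hF.unique (hasDerivAt_const 0 0)]

end CapBoundary

theorem capillary_support_function_boundary_identities_general
    (n : ℕ) (θ : ℝ) (hθ : θ ∈ Set.Ioo 0 π)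
    (h : Euc n → ℝ) (hh : ContDiff ℝ 2 h) (hR : RobinBC n θ h) :
    ∀ ξ ∈ capBdry n θ,
      ⟪sgrad n θ (fun x => h x / lFun n θ x) ξ, conormal n θ ξ⟫ = 0 ∧
      ∀ X : Euc n, IsTangent n θ ξ X → ⟪X, conormal n θ ξ⟫ = 0 →
        shess n θ (fun x => h x / lFun n θ x) ξ X (conormal n θ ξ) =
          -Real.cot θ * ⟪sgrad n θ (fun x => h x / lFun n θ x) ξ, X⟫ := by
  have hs : sin θ ≠ 0 := (sin_pos_of_pos_of_lt_pi hθ.1 hθ.2).ne'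
  have hl0 {ξ : Euc n} (hξ : ξ ∈ capBdry n θ) : lFun n θ ξ ≠ 0 := by
    rw [lFun_of_mem_capBdry hξ]
    exact pow_ne_zero 2 hs
  have hNeumann : ∀ y ∈ capBdry n θ,
      fderiv ℝ (fun x => h x / lFun n θ x) y (conormal n θ y) = 0 := fun y hy =>
    hR.fderiv_div_conormal_eq_zero robinBC_lFun hy (hh.differentiable two_ne_zero y)
      (hasFDerivAt_lFun y).differentiableAt (hl0 hy)
  intro ξ hξ
  refine ⟨by rw [inner_sgrad_of_isTangent (isTangent_conormal hξ), hNeumann ξ hξ],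
    fun X hX hXμ => ?_⟩
  obtain ⟨hXξ, hXe⟩ := inner_eq_zero_of_isTangent_of_inner_conormal hs hX hXμ
  have hu : ContDiffAt ℝ 2 (fun x => h x / lFun n θ x) ξ :=
    hh.contDiffAt.div contDiff_lFun.contDiffAt (hl0 hξ)
  rw [shess, hXμ, mul_zero, sub_zero, inner_sgrad_of_isTangent hX, ← inner_gradient_left]
  exact inner_fderiv_gradient_conormal hs hξ hu.differentiableAt_gradient hNeumann hXξ hXe

/-- Proposition 2.1, second part: if `h ∈ C²(C_θ)` satisfies
`∇_μ h = cot θ · h` on `∂C_θ` and `u := h/l`, then `∇_μ u = 0` on `∂C_θ` and along `∂C_θ`,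
`∇²u(e_k, e_n) = -cot θ · ∇_{e_k} u` for every frame vector `e_k` tangent to `∂C_θ`
(equivalently, for every tangent vector `X` orthogonal to `μ`), where `e_n = μ`. -/
theorem capillary_support_function_boundary_identities
    (n : ℕ) (hn : 2 ≤ n) (θ : ℝ) (hθ : θ ∈ Set.Ioo 0 π)
    (h : Euc n → ℝ) (hh : ContDiff ℝ 2 h) (hR : RobinBC n θ h) :
    ∀ ξ ∈ capBdry n θ,
      ⟪sgrad n θ (fun x => h x / lFun n θ x) ξ, conormal n θ ξ⟫ = 0 ∧
      ∀ X : Euc n, IsTangent n θ ξ X → ⟪X, conormal n θ ξ⟫ = 0 →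
        shess n θ (fun x => h x / lFun n θ x) ξ X (conormal n θ ξ) =
          -Real.cot θ * ⟪sgrad n θ (fun x => h x / lFun n θ x) ξ, X⟫ :=
  capillary_support_function_boundary_identities_general n θ hθ h hh hR
end
end

section
/- Let p > q, θ ∈ (0, π/2), let f > 0 be smooth on C_θ, and let h be a positive convex solution of det(∇²h + hσ) = f·h^{p-1}(h² + |∇h|²)^{(n+1-q)/2} in C_θ with ∇_μ h = cot θ · h on ∂C_θ. Then the linearized operator L_h(γ) := (∂𝒢/∂h_{ij})·((hγ)_{ij} + hγ δ_{ij}) − (∂𝒥₁/∂h_i)·(hγ)_i − (∂𝒥₁/∂h)·hγ, with 𝒢(h_{ij}, h) := det(∇²h + hσ) and 𝒥₁(∇h, h) := f·h^{p-1}(h² + |∇h|²)^{(n+1-q)/2}, evaluated at the constant function γ ≡ 1, equals L_h(1) = (q − p)·𝒥₁(∇h, h), which is strictly negative on C_θ. -/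
/- Formalization of statements from "The L_p dual Minkowski problem for capillary
hypersurfaces".

We work in the ambient space `ℝ^{n+1}`.  The spherical cap `C_θ` is the part of the unit
sphere centred at `cos θ • e` (where `e = -E_{n+1}`) lying in the closed upper half-space.
Functions on `C_θ` are represented by ambient functions `h : Euc n → ℝ`; the intrinsic
(round-metric) gradient `∇h` and Hessian `∇²h` of the restriction of `h` to `C_θ` are
expressed through ambient derivatives (for tangential arguments these expressions depend
only on the restriction of `h` to the cap).  The quantity `det(∇²h + hσ)` is encoded as the
determinant of the endomorphism of `ℝ^{n+1}` acting as `∇²h + hσ` on the tangent space of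
the cap and as the identity on the normal line. -/

open Real Set
open scoped RealInnerProductSpace

noncomputable section

/-!
For `γ ≡ 1` the variation in `linOp` is the dilation `h_ε = e^ε h`, so `L_h(1)` only sees how
both sides of the equation scale. Multiplying `h` by `c` multiplies the Hessian operator
`∇²h + hσ` by `c` on the tangent space and fixes the normal line, so `det(∇²h + hσ)` scales by
`c^n`; the right-hand side `𝒥₁` scales by `c^(p + n - q)`. Hence
`L_h(1) = n 𝒢 - (p + n - q) 𝒥₁`, which at a solution (`𝒢 = 𝒥₁ > 0`) is `(q - p) 𝒥₁ < 0`.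
-/

theorem LinearMap.det_id_add_smulRight {R M : Type*} [CommRing R] [AddCommGroup M] [Module R M]
    [Module.Free R M] [Module.Finite R M] (φ : M →ₗ[R] R) (v : M) :
    LinearMap.det (LinearMap.id + φ.smulRight v) = 1 + φ v := by
  classical
  let b := Module.Free.chooseBasis R M
  have hmat : LinearMap.toMatrix b b (LinearMap.id + φ.smulRight v)
      = 1 + Matrix.replicateCol Unit (b.repr v) * Matrix.replicateRow Unit (φ ∘ b) := by
    ext i j
    simp [LinearMap.toMatrix_apply, Matrix.one_apply, Finsupp.single_apply, Matrix.mul_apply,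
      eq_comm, mul_comm]
  rw [← LinearMap.det_toMatrix b, hmat, Matrix.det_one_add_replicateCol_mul_replicateRow]
  conv_rhs => rw [← b.sum_repr v, map_sum]
  simp only [dotProduct, Function.comp_apply, map_smul, smul_eq_mul, mul_comm]

theorem gradient_const_smul {F : Type*} [NormedAddCommGroup F] [InnerProductSpace ℝ F]
    [CompleteSpace F] (c : ℝ) (f : F → ℝ) : gradient (c • f) = c • gradient f := by
  funext x
  simp [gradient, fderiv_const_smul_field]

section Cap

variable {n : ℕ} {θ : ℝ} {ξ : Euc n}

lemma tproj_apply (X : Euc n) : tproj n θ ξ X = X - ⟪sphNormal n θ ξ, X⟫ • sphNormal n θ ξ := by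
  simp [tproj]

lemma normalPart_apply (X : Euc n) :
    normalPart n θ ξ X = ⟪sphNormal n θ ξ, X⟫ • sphNormal n θ ξ := by
  simp [normalPart]

variable (hν : ‖sphNormal n θ ξ‖ = 1)
include hν

lemma tproj_sphNormal : tproj n θ ξ (sphNormal n θ ξ) = 0 := by
  simp [tproj_apply, hν]

lemma inner_sphNormal_tproj (X : Euc n) : ⟪sphNormal n θ ξ, tproj n θ ξ X⟫ = 0 := by
  simp [tproj_apply, inner_sub_right, real_inner_smul_right, hν]

lemma tproj_tproj (X : Euc n) : tproj n θ ξ (tproj n θ ξ X) = tproj n θ ξ X := by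
  rw [tproj_apply (tproj n θ ξ X), inner_sphNormal_tproj hν, zero_smul, sub_zero]

lemma hessOp_sphNormal (h : Euc n → ℝ) : hessOp n θ h ξ (sphNormal n θ ξ) = sphNormal n θ ξ := by
  simp [hessOp, thessOp, tproj_sphNormal hν, normalPart_apply, hν]

lemma hessOp_tproj (h : Euc n → ℝ) (X : Euc n) :
    hessOp n θ h ξ (tproj n θ ξ X) = thessOp n θ h ξ X + h ξ • tproj n θ ξ X := by
  simp [hessOp, thessOp, tproj_tproj hν, normalPart_apply, inner_sphNormal_tproj hν]

end Cap

section Scaling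

variable {n : ℕ} {θ : ℝ} {ξ : Euc n}

lemma sgrad_const_smul (c : ℝ) (h : Euc n → ℝ) :
    sgrad n θ (c • h) ξ = c • sgrad n θ h ξ := by
  simp [sgrad, gradient_const_smul]

lemma thessOp_const_smul (c : ℝ) (h : Euc n → ℝ) :
    thessOp n θ (c • h) ξ = c • thessOp n θ h ξ := by
  ext X
  simp [thessOp, gradient_const_smul, fderiv_const_smul_field, real_inner_smul_left, smul_sub,
    smul_smul]

lemma eqRHS_const_smul (p q : ℝ) (f : Euc n → ℝ) {c : ℝ} (hc : 0 < c) {h : Euc n → ℝ}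
    (hpos : 0 ≤ h ξ) :
    eqRHS n θ p q f (c • h) ξ = c ^ (p + n - q) * eqRHS n θ p q f h ξ := by
  have hgrad : (c * h ξ) ^ 2 + ‖c • sgrad n θ h ξ‖ ^ 2
      = c ^ 2 * (h ξ ^ 2 + ‖sgrad n θ h ξ‖ ^ 2) := by
    rw [norm_smul, Real.norm_of_nonneg hc.le]; ring
  have hsq : (c ^ 2) ^ (((n : ℝ) + 1 - q) / 2) = c ^ ((n : ℝ) + 1 - q) := by
    rw [← Real.rpow_natCast, ← Real.rpow_mul hc.le]; congr 1; push_cast; ring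
  simp only [eqRHS, sgrad_const_smul, Pi.smul_apply, smul_eq_mul]
  rw [hgrad, Real.mul_rpow hc.le hpos, Real.mul_rpow (sq_nonneg c) (by positivity), hsq,
    show p + n - q = (p - 1) + (n + 1 - q) by ring, Real.rpow_add hc]
  ring

def tangentDilation (n : ℕ) (θ : ℝ) (ξ : Euc n) (c : ℝ) : Euc n →L[ℝ] Euc n :=
  c • tproj n θ ξ + normalPart n θ ξ

variable (hν : ‖sphNormal n θ ξ‖ = 1)
include hν

lemma hessOp_const_smul (c : ℝ) (h : Euc n → ℝ) :
    hessOp n θ (c • h) ξ = (hessOp n θ h ξ).comp (tangentDilation n θ ξ c) := by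
  refine ContinuousLinearMap.ext fun X => ?_
  simp only [ContinuousLinearMap.comp_apply, tangentDilation, add_apply, smul_apply,
    normalPart_apply, map_add, map_smul, hessOp_tproj hν, hessOp_sphNormal hν]
  simp only [hessOp, thessOp_const_smul, add_apply, smul_apply, normalPart_apply, Pi.smul_apply,
    smul_eq_mul]
  module

lemma det_tangentDilation {c : ℝ} (hc : c ≠ 0) :
    (tangentDilation n θ ξ c).det = c ^ n := by
  have hD : (tangentDilation n θ ξ c : Euc n →ₗ[ℝ] Euc n)
      = c • (LinearMap.id
          + ((c⁻¹ - 1) • innerₛₗ ℝ (sphNormal n θ ξ)).smulRight (sphNormal n θ ξ)) := by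
    refine LinearMap.ext fun X => ?_
    simp only [ContinuousLinearMap.coe_coe, tangentDilation, tproj_apply, normalPart_apply,
      add_apply, smul_apply, LinearMap.smul_apply, LinearMap.add_apply, LinearMap.id_apply,
      LinearMap.smulRight_apply, innerₛₗ_apply_apply, smul_eq_mul]
    match_scalars <;> field_simp
    ring
  rw [ContinuousLinearMap.det, hD, LinearMap.det_smul, LinearMap.det_id_add_smulRight]
  simp [hν]
  field_simp
  ring

lemma sdet_const_smul {c : ℝ} (hc : c ≠ 0) (h : Euc n → ℝ) :
    sdet n θ (c • h) ξ = c ^ n * sdet n θ h ξ := by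
  rw [sdet, hessOp_const_smul hν, ContinuousLinearMap.toLinearMap_comp, LinearMap.det_comp,
    sdet, mul_comm]
  exact congrArg (· * _) (det_tangentDilation hν hc)

end Scaling

lemma linOp_const_one {n : ℕ} {θ : ℝ} {ξ : Euc n} (hν : ‖sphNormal n θ ξ‖ = 1) (p q : ℝ)
    (f : Euc n → ℝ) {h : Euc n → ℝ} (hpos : 0 ≤ h ξ) :
    linOp n θ p q f h (fun _ => 1) ξ
      = n * sdet n θ h ξ - (p + n - q) * eqRHS n θ p q f h ξ := by
  have hcurve : (fun ε : ℝ => sdet n θ (fun x => h x * Real.exp (ε * 1)) ξ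
        - eqRHS n θ p q f (fun x => h x * Real.exp (ε * 1)) ξ)
      = fun ε => Real.exp (ε * n) * sdet n θ h ξ
        - Real.exp (ε * (p + n - q)) * eqRHS n θ p q f h ξ := by
    funext ε
    have hscale : (fun x => h x * Real.exp (ε * 1)) = Real.exp ε • h := by
      funext x; simp [mul_comm]
    rw [hscale, sdet_const_smul hν (Real.exp_ne_zero ε),
      eqRHS_const_smul p q f (Real.exp_pos ε) hpos, Real.exp_mul, Real.exp_mul, Real.rpow_natCast]
  have hexp (a : ℝ) : HasDerivAt (fun ε : ℝ => Real.exp (ε * a)) a 0 := by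
    simpa using ((hasDerivAt_id (0 : ℝ)).mul_const a).exp
  rw [linOp, hcurve]
  exact (((hexp n).mul_const _).sub ((hexp _).mul_const _)).deriv

lemma eqRHS_pos {n : ℕ} {θ p q : ℝ} {f h : Euc n → ℝ} {ξ : Euc n} (hf : 0 < f ξ) (hh : 0 < h ξ) :
    0 < eqRHS n θ p q f h ξ := by
  unfold eqRHS; positivity

theorem linearized_operator_at_one_general
    (n : ℕ) (θ p q : ℝ) (hpq : q < p)
    (f : Euc n → ℝ) (hfpos : ∀ ξ ∈ cap n θ, 0 < f ξ)
    (h : Euc n → ℝ) (hhpos : PosOnCap n θ h)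
    (heq : SolvesEq n θ p q f h) :
    ∀ ξ ∈ cap n θ,
      linOp n θ p q f h (fun _ => 1) ξ = (q - p) * eqRHS n θ p q f h ξ ∧
      linOp n θ p q f h (fun _ => 1) ξ < 0 := by
  intro ξ hξ
  have hL : linOp n θ p q f h (fun _ => 1) ξ = (q - p) * eqRHS n θ p q f h ξ := by
    rw [linOp_const_one hξ.2 p q f (hhpos ξ hξ).le, heq ξ hξ]
    ring
  exact ⟨hL, hL ▸ mul_neg_of_neg_of_pos (by linarith) (eqRHS_pos (hfpos ξ hξ) (hhpos ξ hξ))⟩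

/-- from the proof of Lemma 5.2: at a positive convex solution `h`, the
linearized operator evaluated at the constant function `γ ≡ 1` equals
`L_h(1) = (q - p)·𝒥₁(∇h, h)`, which is strictly negative on `C_θ` when `p > q`. -/
theorem linearized_operator_at_one
    (n : ℕ) (hn : 1 ≤ n) (θ p q : ℝ) (hθ : θ ∈ Set.Ioo 0 (π / 2)) (hpq : q < p)
    (f : Euc n → ℝ) (hf : ContDiff ℝ (⊤ : ℕ∞) f) (hfpos : ∀ ξ ∈ cap n θ, 0 < f ξ)
    (h : Euc n → ℝ) (hh : ContDiff ℝ (⊤ : ℕ∞) h) (hhpos : PosOnCap n θ h)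
    (hconv : IsConvexSol n θ h) (heq : SolvesEq n θ p q f h) (hR : RobinBC n θ h) :
    ∀ ξ ∈ cap n θ,
      linOp n θ p q f h (fun _ => 1) ξ = (q - p) * eqRHS n θ p q f h ξ ∧
      linOp n θ p q f h (fun _ => 1) ξ < 0 :=
  linearized_operator_at_one_general n θ p q hpq f hfpos h hhpos heq
end
end
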